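/- arXiv:2305.07547 — 8 statements merged into one kernel-verified Lean document; each statement's English description precedes it below -/
import Mathlib

section
/- Let κ, τ : ℝ → ℝ and let α, β, γ : ℝ → ℝ be differentiable functions satisfying the Frenet–Serret system α' = κβ, β' = −κα + τγ, γ' = −τβ, together with α(s)² + β(s)² + γ(s)² = 1 and γ(s) ≠ 1 for all s. Then the complex-valued function w(s) = (α(s) + iβ(s))/(1 − γ(s)) is differentiable and satisfies the Riccati equation w' = −iκw + (i/2)τw² − (i/2)τ. -/
theorem lie_darboux_riccati_w
    (κ τ α β γ : ℝ → ℝ)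
    (hα : Differentiable ℝ α) (hβ : Differentiable ℝ β) (hγ : Differentiable ℝ γ)
    (hFS1 : ∀ s, deriv α s = κ s * β s)
    (hFS2 : ∀ s, deriv β s = -κ s * α s + τ s * γ s)
    (hFS3 : ∀ s, deriv γ s = -τ s * β s)
    (hsph : ∀ s, α s ^ 2 + β s ^ 2 + γ s ^ 2 = 1)
    (hγ1 : ∀ s, γ s ≠ 1) :
    let w : ℝ → ℂ := fun s => ((α s : ℂ) + Complex.I * (β s : ℂ)) / (1 - (γ s : ℂ))
    Differentiable ℝ w ∧
      ∀ s, deriv w s =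
        -Complex.I * (κ s : ℂ) * w s + (Complex.I / 2) * (τ s : ℂ) * (w s) ^ 2
          - (Complex.I / 2) * (τ s : ℂ) := by
  intro w
  have key : ∀ s, HasDerivAt w
      (((((κ s * β s : ℝ) : ℂ) + Complex.I * ((-κ s * α s + τ s * γ s : ℝ) : ℂ)) * (1 - (γ s : ℂ))
        - ((α s : ℂ) + Complex.I * (β s : ℂ)) * ((τ s * β s : ℝ) : ℂ)) / ((1 - (γ s : ℂ)) ^ 2)) s := by
    intro s
    have hne : (1 - (γ s : ℂ)) ≠ 0 := by
      intro h
      apply hγ1 s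
      have := sub_eq_zero.mp h
      exact_mod_cast this.symm
    have ha : HasDerivAt (fun t => ((α t : ℝ) : ℂ)) ((κ s * β s : ℝ) : ℂ) s := by
      have := (hα s).hasDerivAt
      rw [hFS1 s] at this
      exact this.ofReal_comp
    have hb : HasDerivAt (fun t => ((β t : ℝ) : ℂ)) ((-κ s * α s + τ s * γ s : ℝ) : ℂ) s := by
      have := (hβ s).hasDerivAt
      rw [hFS2 s] at this
      exact this.ofReal_comp
    have hg : HasDerivAt (fun t => (1 - ((γ t : ℝ) : ℂ))) ((τ s * β s : ℝ) : ℂ) s := by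
      have := (hγ s).hasDerivAt
      rw [hFS3 s] at this
      have := (this.ofReal_comp).const_sub 1
      simpa using this
    have hA : HasDerivAt (fun t => ((α t : ℂ) + Complex.I * (β t : ℂ)))
        (((κ s * β s : ℝ) : ℂ) + Complex.I * ((-κ s * α s + τ s * γ s : ℝ) : ℂ)) s :=
      ha.add (hb.const_mul _)
    exact hA.div hg hne
  constructor
  · exact fun s => (key s).differentiableAt
  · intro s
    rw [(key s).deriv]
    have hne : (1 - (γ s : ℂ)) ≠ 0 := by
      intro h
      apply hγ1 s
      have := sub_eq_zero.mp h
      exact_mod_cast this.symm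
    have h : ((α s : ℂ)) ^ 2 + (β s : ℂ) ^ 2 + (γ s : ℂ) ^ 2 = 1 := by
      exact_mod_cast congrArg (Complex.ofReal) (hsph s)
    show _ = -Complex.I * (κ s : ℂ) * (((α s : ℂ) + Complex.I * (β s : ℂ)) / (1 - (γ s : ℂ)))
        + (Complex.I / 2) * (τ s : ℂ) * (((α s : ℂ) + Complex.I * (β s : ℂ)) / (1 - (γ s : ℂ))) ^ 2
        - (Complex.I / 2) * (τ s : ℂ)
    push_cast
    field_simp
    linear_combination (-Complex.I * (τ s : ℂ)) * h
      + (2 * (κ s : ℂ) * (β s : ℂ) * (1 - (γ s : ℂ)) - 2 * (τ s : ℂ) * (α s : ℂ) * (β s : ℂ)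
          - (τ s : ℂ) * (β s : ℂ) ^ 2 * Complex.I) * Complex.I_sq
end

section
/- Let κ, τ : ℝ → ℝ and let α, β, γ : ℝ → ℝ be differentiable functions satisfying the Frenet–Serret system α' = κβ, β' = −κα + τγ, γ' = −τβ, together with α(s)² + β(s)² + γ(s)² = 1 and γ(s) ≠ −1 for all s. Then the complex-valued function z(s) = −(α(s) + iβ(s))/(1 + γ(s)) is differentiable and satisfies the same Riccati equation as the function w of the Lie–Darboux method, namely z' = −iκz + (i/2)τz² − (i/2)τ. -/
lemma lie_darboux_riccati_z_aux (k t a b c : ℂ)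
    (hs : a ^ 2 + b ^ 2 + c ^ 2 = 1) (hDs : (1:ℂ) + c ≠ 0) :
    -(((k * b + Complex.I * (-(k * a) + t * c)) * (1 + c) - (a + Complex.I * b) * -(t * b)) /
        (1 + c) ^ 2) =
      -Complex.I * k * (-((a + Complex.I * b) / (1 + c)))
      + (Complex.I / 2) * t * (-((a + Complex.I * b) / (1 + c))) ^ 2
      - (Complex.I / 2) * t := by
  rw [← neg_div]
  have hnum : -((k * b + Complex.I * (-(k * a) + t * c)) * (1 + c) - (a + Complex.I * b) * -(t * b))
      = (Complex.I * k * ((a + Complex.I * b) / (1 + c))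
          + (Complex.I / 2) * t * ((a + Complex.I * b) / (1 + c)) ^ 2
          - (Complex.I / 2) * t) * (1 + c) ^ 2 := by
    have hw : (a + Complex.I * b) / (1 + c) * (1 + c) = a + Complex.I * b :=
      div_mul_cancel₀ _ hDs
    have h1 : (Complex.I * k * ((a + Complex.I * b) / (1 + c))
          + (Complex.I / 2) * t * ((a + Complex.I * b) / (1 + c)) ^ 2
          - (Complex.I / 2) * t) * (1 + c) ^ 2
        = Complex.I * k * ((a + Complex.I * b) / (1 + c) * (1 + c)) * (1 + c)
          + (Complex.I / 2) * t * ((a + Complex.I * b) / (1 + c) * (1 + c)) ^ 2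
          - (Complex.I / 2) * t * (1 + c) ^ 2 := by ring
    rw [h1, hw]
    linear_combination (-(Complex.I * t) / 2) * hs +
      (-(k * b * (1 + c)) - t * a * b - Complex.I * t * b ^ 2 / 2) * Complex.I_sq
  rw [hnum, mul_div_cancel_right₀ _ (pow_ne_zero 2 hDs)]
  ring

theorem lie_darboux_riccati_z
    (κ τ α β γ : ℝ → ℝ)
    (hα : Differentiable ℝ α) (hβ : Differentiable ℝ β) (hγ : Differentiable ℝ γ)
    (hFS1 : ∀ s, deriv α s = κ s * β s)
    (hFS2 : ∀ s, deriv β s = -κ s * α s + τ s * γ s)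
    (hFS3 : ∀ s, deriv γ s = -τ s * β s)
    (hsph : ∀ s, α s ^ 2 + β s ^ 2 + γ s ^ 2 = 1)
    (hγ1 : ∀ s, γ s ≠ -1) :
    let z : ℝ → ℂ := fun s => -(((α s : ℂ) + Complex.I * (β s : ℂ)) / (1 + (γ s : ℂ)))
    Differentiable ℝ z ∧
      ∀ s, deriv z s =
        -Complex.I * (κ s : ℂ) * z s + (Complex.I / 2) * (τ s : ℂ) * (z s) ^ 2
          - (Complex.I / 2) * (τ s : ℂ) := by
  intro z
  have hD : ∀ s, (1 : ℂ) + (γ s : ℂ) ≠ 0 := by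
    intro s h
    apply hγ1 s
    have h2 : ((γ s : ℝ) : ℂ) = ((-1 : ℝ) : ℂ) := by push_cast; linear_combination h
    exact_mod_cast h2
  have key : ∀ s, HasDerivAt z
      (-((((κ s : ℂ) * (β s : ℂ) + Complex.I * (-((κ s : ℂ) * (α s : ℂ)) + (τ s : ℂ) * (γ s : ℂ))) *
          (1 + (γ s : ℂ)) -
        ((α s : ℂ) + Complex.I * (β s : ℂ)) * -((τ s : ℂ) * (β s : ℂ))) /
        (1 + (γ s : ℂ)) ^ 2)) s := by
    intro s
    have hαd : HasDerivAt (fun t => ((α t : ℂ))) ((κ s : ℂ) * (β s : ℂ)) s := by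
      have h := (hα s).hasDerivAt
      rw [hFS1 s] at h
      simpa using h.ofReal_comp
    have hβd : HasDerivAt (fun t => ((β t : ℂ)))
        (-((κ s : ℂ) * (α s : ℂ)) + (τ s : ℂ) * (γ s : ℂ)) s := by
      have h := (hβ s).hasDerivAt
      rw [hFS2 s] at h
      have := h.ofReal_comp
      push_cast at this
      convert this using 1
      ring
    have hγd : HasDerivAt (fun t => (1 + (γ t : ℂ))) (-((τ s : ℂ) * (β s : ℂ))) s := by
      have h := (hγ s).hasDerivAt
      rw [hFS3 s] at h
      have := h.ofReal_comp
      push_cast at this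
      have h2 := this.const_add (1 : ℂ)
      convert h2 using 1
      · rfl
      ring
    have hN : HasDerivAt (fun t => ((α t : ℂ) + Complex.I * (β t : ℂ)))
        ((κ s : ℂ) * (β s : ℂ) + Complex.I * (-((κ s : ℂ) * (α s : ℂ)) + (τ s : ℂ) * (γ s : ℂ))) s :=
      hαd.add (hβd.const_mul _)
    exact (hN.div hγd (hD s)).neg
  refine ⟨fun s => (key s).differentiableAt, fun s => ?_⟩
  rw [(key s).deriv]
  have hs : ((α s : ℂ)) ^ 2 + ((β s : ℂ)) ^ 2 + ((γ s : ℂ)) ^ 2 = 1 := by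
    exact_mod_cast congrArg (fun x : ℝ => (x : ℂ)) (hsph s)
  show _ = -Complex.I * (κ s : ℂ) * (-(((α s : ℂ) + Complex.I * (β s : ℂ)) / (1 + (γ s : ℂ))))
      + (Complex.I / 2) * (τ s : ℂ) *
        (-(((α s : ℂ) + Complex.I * (β s : ℂ)) / (1 + (γ s : ℂ)))) ^ 2
      - (Complex.I / 2) * (τ s : ℂ)
  exact lie_darboux_riccati_z_aux (κ s : ℂ) (τ s : ℂ) (α s : ℂ) (β s : ℂ) (γ s : ℂ) hs (hD s)
end

section
/- Let κ, τ : ℝ → ℝ, let k > 0, and let α, β, γ : ℝ → ℝ be differentiable functions satisfying the Frenet–Serret system α' = κβ, β' = −κα + τγ, γ' = −τβ, together with k²(α(s)² + β(s)² + γ(s)²) = 1 and kγ(s) ≠ 1 for all s. Then the complex-valued function w(s) = (kα(s) + ikβ(s))/(1 − kγ(s)) is differentiable and satisfies the Riccati equation w' = −iκw + (i/2)τw² − (i/2)τ. -/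
theorem generalized_lie_darboux_riccati_k3_eq_k
    (κ τ : ℝ → ℝ) (k : ℝ) (hk : 0 < k)
    (α β γ : ℝ → ℝ)
    (hα : Differentiable ℝ α) (hβ : Differentiable ℝ β) (hγ : Differentiable ℝ γ)
    (hFS1 : ∀ s, deriv α s = κ s * β s)
    (hFS2 : ∀ s, deriv β s = -κ s * α s + τ s * γ s)
    (hFS3 : ∀ s, deriv γ s = -τ s * β s)
    (hquad : ∀ s, k ^ 2 * (α s ^ 2 + β s ^ 2 + γ s ^ 2) = 1)
    (hγ1 : ∀ s, k * γ s ≠ 1) :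
    let w : ℝ → ℂ := fun s =>
      ((k : ℂ) * (α s : ℂ) + Complex.I * (k : ℂ) * (β s : ℂ)) / (1 - (k : ℂ) * (γ s : ℂ))
    Differentiable ℝ w ∧
      ∀ s, deriv w s =
        -Complex.I * (κ s : ℂ) * w s + (Complex.I / 2) * (τ s : ℂ) * (w s) ^ 2
          - (Complex.I / 2) * (τ s : ℂ) := by
  intro w
  have hD0 : ∀ s, (1 - (k : ℂ) * (γ s : ℂ)) ≠ 0 := by
    intro s h
    apply hγ1 s
    have : ((k * γ s : ℝ) : ℂ) = 1 := by push_cast; linear_combination -h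
    exact_mod_cast this
  have key : ∀ s, HasDerivAt w
      (-Complex.I * (κ s : ℂ) * w s + (Complex.I / 2) * (τ s : ℂ) * (w s) ^ 2
        - (Complex.I / 2) * (τ s : ℂ)) s := by
    intro s
    have hda : HasDerivAt (fun x => ((α x : ℝ) : ℂ)) ((κ s * β s : ℝ) : ℂ) s := by
      have h := (hα s).hasDerivAt
      rw [hFS1 s] at h
      exact h.ofReal_comp
    have hdb : HasDerivAt (fun x => ((β x : ℝ) : ℂ)) ((-κ s * α s + τ s * γ s : ℝ) : ℂ) s := by
      have h := (hβ s).hasDerivAt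
      rw [hFS2 s] at h
      exact h.ofReal_comp
    have hdc : HasDerivAt (fun x => ((γ x : ℝ) : ℂ)) ((-τ s * β s : ℝ) : ℂ) s := by
      have h := (hγ s).hasDerivAt
      rw [hFS3 s] at h
      exact h.ofReal_comp
    have hN : HasDerivAt (fun x => (k : ℂ) * (α x : ℂ) + Complex.I * (k : ℂ) * (β x : ℂ))
        ((k : ℂ) * ((κ s * β s : ℝ) : ℂ) + Complex.I * (k : ℂ) * ((-κ s * α s + τ s * γ s : ℝ) : ℂ)) s :=
      (hda.const_mul _).add (hdb.const_mul _)
    have hD : HasDerivAt (fun x => 1 - (k : ℂ) * (γ x : ℂ))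
        (-((k : ℂ) * ((-τ s * β s : ℝ) : ℂ))) s :=
      (hdc.const_mul _).const_sub 1
    have hW := hN.div hD (hD0 s)
    refine hW.congr_deriv (Eq.symm ?_)
    have hq : (k : ℂ) ^ 2 * ((α s : ℂ) ^ 2 + (β s : ℂ) ^ 2 + (γ s : ℂ) ^ 2) = 1 := by
      exact_mod_cast congrArg (Complex.ofReal) (hquad s)
    have hI : Complex.I ^ 2 = -1 := Complex.I_sq
    have hDne : (1 : ℂ) - (k : ℂ) * (γ s : ℂ) ≠ 0 := hD0 s
    have hNW : (k : ℂ) * (α s : ℂ) + Complex.I * (k : ℂ) * (β s : ℂ)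
        = w s * (1 - (k : ℂ) * (γ s : ℂ)) := by
      simp only [w]
      rw [div_mul_cancel₀ _ hDne]
    rw [eq_div_iff (pow_ne_zero 2 hDne)]
    push_cast
    set W := w s with hWdef
    clear_value W
    linear_combination
      (Complex.I / 2) * (τ s : ℂ) * hq
      + ((Complex.I / 2) * (τ s : ℂ) * (k : ℂ) ^ 2 * (β s : ℂ) ^ 2
          + (k : ℂ) ^ 2 * (τ s : ℂ) * (α s : ℂ) * (β s : ℂ)
          - (k : ℂ) * (κ s : ℂ) * (β s : ℂ) * (1 - (k : ℂ) * (γ s : ℂ))) * hI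
      + (Complex.I * (κ s : ℂ) * (1 - (k : ℂ) * (γ s : ℂ))
          - (Complex.I / 2) * (τ s : ℂ)
            * (((k : ℂ) * (α s : ℂ) + Complex.I * (k : ℂ) * (β s : ℂ))
               + W * (1 - (k : ℂ) * (γ s : ℂ)))) * hNW
  exact ⟨fun s => (key s).differentiableAt, fun s => (key s).deriv⟩
end

section
/- Let κ, τ : ℝ → ℝ, let k > 0, and let α, β, γ : ℝ → ℝ be differentiable functions satisfying the Frenet–Serret system α' = κβ, β' = −κα + τγ, γ' = −τβ, together with k²(α(s)² + β(s)² + γ(s)²) = 1 and kγ(s) ≠ −1 for all s. Then the complex-valued function w̃(s) = (kα(s) + ikβ(s))/(1 + kγ(s)) is differentiable and satisfies the Riccati equation w̃' = −iκw̃ − (i/2)τw̃² + (i/2)τ, which differs from the Riccati equation of the case k₃ = k only by the sign of the torsion τ. -/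
theorem generalized_lie_darboux_riccati_k3_eq_neg_k
    (κ τ : ℝ → ℝ) (k : ℝ) (hk : 0 < k)
    (α β γ : ℝ → ℝ)
    (hα : Differentiable ℝ α) (hβ : Differentiable ℝ β) (hγ : Differentiable ℝ γ)
    (hFS1 : ∀ s, deriv α s = κ s * β s)
    (hFS2 : ∀ s, deriv β s = -κ s * α s + τ s * γ s)
    (hFS3 : ∀ s, deriv γ s = -τ s * β s)
    (hquad : ∀ s, k ^ 2 * (α s ^ 2 + β s ^ 2 + γ s ^ 2) = 1)
    (hγ1 : ∀ s, k * γ s ≠ -1) :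
    let w : ℝ → ℂ := fun s =>
      ((k : ℂ) * (α s : ℂ) + Complex.I * (k : ℂ) * (β s : ℂ)) / (1 + (k : ℂ) * (γ s : ℂ))
    Differentiable ℝ w ∧
      ∀ s, deriv w s =
        -Complex.I * (κ s : ℂ) * w s - (Complex.I / 2) * (τ s : ℂ) * (w s) ^ 2
          + (Complex.I / 2) * (τ s : ℂ) := by
  intro w
  have hden : ∀ s, (1 : ℂ) + (k : ℂ) * (γ s : ℂ) ≠ 0 := by
    intro s h
    apply hγ1 s
    have h2 : ((1 + k * γ s : ℝ) : ℂ) = 0 := by push_cast; linear_combination h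
    have := Complex.ofReal_eq_zero.mp h2
    linarith
  have hw : ∀ s, HasDerivAt w
      (((((κ s * β s : ℝ) : ℂ) * k + Complex.I * k * ((-κ s * α s + τ s * γ s : ℝ) : ℂ)) *
          (1 + (k : ℂ) * (γ s : ℂ)) -
        ((k : ℂ) * (α s : ℂ) + Complex.I * (k : ℂ) * (β s : ℂ)) *
          ((k : ℂ) * ((-τ s * β s : ℝ) : ℂ))) /
        (1 + (k : ℂ) * (γ s : ℂ)) ^ 2) s := by
    intro s
    have hA : HasDerivAt (fun t => ((α t : ℝ) : ℂ)) ((κ s * β s : ℝ) : ℂ) s := by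
      have h := (hα s).hasDerivAt
      rw [hFS1 s] at h
      exact h.ofReal_comp
    have hB : HasDerivAt (fun t => ((β t : ℝ) : ℂ)) ((-κ s * α s + τ s * γ s : ℝ) : ℂ) s := by
      have h := (hβ s).hasDerivAt
      rw [hFS2 s] at h
      exact h.ofReal_comp
    have hC : HasDerivAt (fun t => ((γ t : ℝ) : ℂ)) ((-τ s * β s : ℝ) : ℂ) s := by
      have h := (hγ s).hasDerivAt
      rw [hFS3 s] at h
      exact h.ofReal_comp
    have hN : HasDerivAt (fun t => (k : ℂ) * (α t : ℂ) + Complex.I * (k : ℂ) * (β t : ℂ))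
        (((κ s * β s : ℝ) : ℂ) * k + Complex.I * k * ((-κ s * α s + τ s * γ s : ℝ) : ℂ)) s := by
      have := ((hA.const_mul (k : ℂ)).add (hB.const_mul (Complex.I * k)))
      convert this using 1
      · rfl
      · rfl
      · ring
    have hD : HasDerivAt (fun t => (1 : ℂ) + (k : ℂ) * (γ t : ℂ))
        ((k : ℂ) * ((-τ s * β s : ℝ) : ℂ)) s := by
      have := (hC.const_mul (k : ℂ)).const_add 1
      exact this
    exact hN.div hD (hden s)
  constructor
  · intro s
    exact (hw s).differentiableAt
  · intro s
    rw [(hw s).deriv]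
    have hq : ((k : ℂ)) ^ 2 * ((α s : ℂ) ^ 2 + (β s : ℂ) ^ 2 + (γ s : ℂ) ^ 2) = 1 := by
      have := hquad s
      exact_mod_cast congrArg (Complex.ofReal) this
    have hd := hden s
    have gen : ∀ (A B C f d : ℂ), d ≠ 0 →
        A * (f / d) - B * (f / d) ^ 2 + C = (A * f * d - B * f ^ 2 + C * d ^ 2) / d ^ 2 := by
      intro A B C f d hd
      field_simp
    have hR := gen (-Complex.I * (κ s : ℂ)) ((Complex.I / 2) * (τ s : ℂ)) ((Complex.I / 2) * (τ s : ℂ))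
      ((k : ℂ) * (α s : ℂ) + Complex.I * (k : ℂ) * (β s : ℂ)) (1 + (k : ℂ) * (γ s : ℂ)) hd
    show _ = -Complex.I * (κ s : ℂ) * (((k : ℂ) * (α s : ℂ) + Complex.I * (k : ℂ) * (β s : ℂ)) / (1 + (k : ℂ) * (γ s : ℂ))) - (Complex.I / 2) * (τ s : ℂ) * (((k : ℂ) * (α s : ℂ) + Complex.I * (k : ℂ) * (β s : ℂ)) / (1 + (k : ℂ) * (γ s : ℂ))) ^ 2 + (Complex.I / 2) * (τ s : ℂ)
    rw [hR]
    congr 1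
    push_cast
    linear_combination (Complex.I / 2 * (τ s : ℂ)) * hq +
      ((κ s : ℂ) * (β s : ℂ) * k * (1 + (k : ℂ) * (γ s : ℂ)) + (τ s : ℂ) * (k : ℂ) ^ 2 * (α s : ℂ) * (β s : ℂ) +
        (Complex.I / 2) * (τ s : ℂ) * (k : ℂ) ^ 2 * (β s : ℂ) ^ 2) * Complex.I_sq
end

section
/- Let ξ ∈ ℝ, set η = √(ξ² + 1), w₁ = ξ + η, w₂ = ξ − η. Let τ : ℝ → ℝ and let I : ℝ → ℝ be differentiable with I'(s) = τ(s) for all s. Let K ∈ ℂ be a constant such that K·e^{iηI(s)} ≠ 1 for all s. Then the function w(s) = (K w₂ e^{iηI(s)} − w₁)/(K e^{iηI(s)} − 1) is differentiable and satisfies the Riccati equation w' = (iτ/2)(w² − 2ξw − 1). -/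
theorem helix_riccati_solution_k3_eq_k
    (ξ η w₁ w₂ : ℝ)
    (hη : η = Real.sqrt (ξ ^ 2 + 1))
    (hw₁ : w₁ = ξ + η) (hw₂ : w₂ = ξ - η)
    (τ Iτ : ℝ → ℝ) (hI : Differentiable ℝ Iτ)
    (hI' : ∀ s, deriv Iτ s = τ s)
    (K : ℂ)
    (hK : ∀ s, K * Complex.exp (Complex.I * (η : ℂ) * (Iτ s : ℂ)) ≠ 1) :
    let w : ℝ → ℂ := fun s =>
      (K * (w₂ : ℂ) * Complex.exp (Complex.I * (η : ℂ) * (Iτ s : ℂ)) - (w₁ : ℂ)) /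
        (K * Complex.exp (Complex.I * (η : ℂ) * (Iτ s : ℂ)) - 1)
    Differentiable ℝ w ∧
      ∀ s, deriv w s =
        (Complex.I * (τ s : ℂ) / 2) * ((w s) ^ 2 - 2 * (ξ : ℂ) * w s - 1) := by
  intro w
  have hη2 : (η : ℂ) ^ 2 = (ξ : ℂ) ^ 2 + 1 := by
    have h : η ^ 2 = ξ ^ 2 + 1 := by
      rw [hη]; exact Real.sq_sqrt (by positivity)
    exact_mod_cast congrArg (Complex.ofReal) h
  set E : ℝ → ℂ := fun s => Complex.exp (Complex.I * (η : ℂ) * (Iτ s : ℂ)) with hE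
  have hden : ∀ s, K * E s - 1 ≠ 0 := fun s => sub_ne_zero.mpr (hK s)
  have hEd : ∀ s, HasDerivAt E (Complex.I * (η : ℂ) * (τ s : ℂ) * E s) s := by
    intro s
    have h1 : HasDerivAt Iτ (τ s) s := by
      simpa [hI' s] using (hI s).hasDerivAt
    have h2 : HasDerivAt (fun x => (Iτ x : ℂ)) ((τ s : ℂ)) s := h1.ofReal_comp
    have h3 : HasDerivAt (fun x => Complex.I * (η : ℂ) * (Iτ x : ℂ))
        (Complex.I * (η : ℂ) * (τ s : ℂ)) s := h2.const_mul _
    simpa [hE, mul_comm, mul_assoc, mul_left_comm] using h3.cexp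
  have hwd : ∀ s, HasDerivAt w
      (((K * (w₂ : ℂ) * (Complex.I * (η : ℂ) * (τ s : ℂ) * E s)) * (K * E s - 1) -
        (K * (w₂ : ℂ) * E s - (w₁ : ℂ)) * (K * (Complex.I * (η : ℂ) * (τ s : ℂ) * E s))) /
        (K * E s - 1) ^ 2) s := by
    intro s
    have hnum : HasDerivAt (fun x => K * (w₂ : ℂ) * E x - (w₁ : ℂ))
        (K * (w₂ : ℂ) * (Complex.I * (η : ℂ) * (τ s : ℂ) * E s)) s := by
      simpa using (((hEd s).const_mul (K * (w₂ : ℂ))).sub_const (w₁ : ℂ))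
    have hden' : HasDerivAt (fun x => K * E x - 1)
        (K * (Complex.I * (η : ℂ) * (τ s : ℂ) * E s)) s := by
      simpa using (((hEd s).const_mul K).sub_const 1)
    exact hnum.div hden' (hden s)
  refine ⟨fun s => (hwd s).differentiableAt, fun s => ?_⟩
  rw [(hwd s).deriv]
  show _ = Complex.I * (τ s : ℂ) / 2 *
      (((K * (w₂ : ℂ) * E s - (w₁ : ℂ)) / (K * E s - 1)) ^ 2 -
        2 * (ξ : ℂ) * ((K * (w₂ : ℂ) * E s - (w₁ : ℂ)) / (K * E s - 1)) - 1)
  have hd := hden s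
  field_simp
  subst hw₁ hw₂
  push_cast
  linear_combination (-(τ s : ℂ) * (1 - K * E s) ^ 2) * hη2
end

section
/- Let a, b > 0, c = √(a² + b²), w₁ = (a + c)/b, w₂ = (a − c)/b, and θ ∈ ℝ. Define f₁ = w₂ e^{iθ}, f₂ = −w₁, f₃ = e^{iθ}, f₄ = −1 in ℂ. Then f₁f₄ − f₂f₃ ≠ 0 and the Scheffers components satisfy: ((f₁² − f₃²) − (f₂² − f₄²))/(2(f₁f₄ − f₂f₃)) = i·(a(a − c)/(bc))·sin_k(θ), i·((f₁² − f₃²) + (f₂² − f₄²))/(2(f₁f₄ − f₂f₃)) = i·(a(a − c)/(bc))·cos_k(θ), and (f₃f₄ − f₁f₂)/(f₁f₄ − f₂f₃) = −b/c. -/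
theorem helix_scheffers_components_k3_eq_k
    (a b c w₁ w₂ : ℝ) (ha : 0 < a) (hb : 0 < b)
    (hc : c = Real.sqrt (a ^ 2 + b ^ 2))
    (hw₁ : w₁ = (a + c) / b) (hw₂ : w₂ = (a - c) / b)
    (θ : ℝ)
    (f₁ f₂ f₃ f₄ : ℂ)
    (hf₁ : f₁ = (w₂ : ℂ) * Complex.exp (Complex.I * (θ : ℂ)))
    (hf₂ : f₂ = -(w₁ : ℂ))
    (hf₃ : f₃ = Complex.exp (Complex.I * (θ : ℂ)))
    (hf₄ : f₄ = -1) :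
    let Ck : ℂ := ((a + c) / (a - c) : ℝ)
    let sink : ℂ := (Complex.exp (Complex.I * (θ : ℂ)) - Ck * Complex.exp (-(Complex.I * (θ : ℂ)))) / (2 * Complex.I)
    let cosk : ℂ := (Complex.exp (Complex.I * (θ : ℂ)) + Ck * Complex.exp (-(Complex.I * (θ : ℂ)))) / 2
    f₁ * f₄ - f₂ * f₃ ≠ 0 ∧
      ((f₁ ^ 2 - f₃ ^ 2) - (f₂ ^ 2 - f₄ ^ 2)) / (2 * (f₁ * f₄ - f₂ * f₃)) =
        Complex.I * ((a * (a - c) / (b * c) : ℝ) : ℂ) * sink ∧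
      Complex.I * ((f₁ ^ 2 - f₃ ^ 2) + (f₂ ^ 2 - f₄ ^ 2)) / (2 * (f₁ * f₄ - f₂ * f₃)) =
        Complex.I * ((a * (a - c) / (b * c) : ℝ) : ℂ) * cosk ∧
      (f₃ * f₄ - f₁ * f₂) / (f₁ * f₄ - f₂ * f₃) = ((-b / c : ℝ) : ℂ) := by
  intro Ck sink cosk
  have hc0 : (0:ℝ) < c := by
    rw [hc]; positivity
  have hca : a < c := by
    have h1 : a = Real.sqrt (a ^ 2) := by rw [Real.sqrt_sq ha.le]
    rw [h1, hc]
    exact Real.sqrt_lt_sqrt (by positivity) (by nlinarith)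
  have hc2 : c ^ 2 = a ^ 2 + b ^ 2 := by
    rw [hc, Real.sq_sqrt (by positivity)]
  -- key real identities
  have key1 : w₂ ^ 2 - 1 = 2 * a * (a - c) / b ^ 2 := by
    rw [hw₂]; field_simp; linear_combination hc2
  have key2 : w₁ ^ 2 - 1 = 2 * a * (a + c) / b ^ 2 := by
    rw [hw₁]; field_simp; linear_combination hc2
  have key3 : w₁ * w₂ = -1 := by
    rw [hw₁, hw₂]
    rw [div_mul_div_comm]
    rw [div_eq_iff (by positivity : b * b ≠ 0)]
    linear_combination -hc2
  -- complex versions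
  have hb0 : (b:ℂ) ≠ 0 := by exact_mod_cast hb.ne'
  have hc0' : (c:ℂ) ≠ 0 := by exact_mod_cast hc0.ne'
  have hac : (a:ℂ) - c ≠ 0 := by
    have h2 : (a:ℂ) ≠ (c:ℂ) := by exact_mod_cast (ne_of_lt hca)
    exact sub_ne_zero.mpr h2
  have key1' : (w₂:ℂ) ^ 2 - 1 = 2 * a * ((a:ℂ) - c) / b ^ 2 := by exact_mod_cast key1
  have key2' : (w₁:ℂ) ^ 2 - 1 = 2 * a * ((a:ℂ) + c) / b ^ 2 := by exact_mod_cast key2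
  have key3' : (w₁:ℂ) * w₂ = -1 := by exact_mod_cast key3
  set E := Complex.exp (Complex.I * (θ : ℂ)) with hE
  have hE0 : E ≠ 0 := Complex.exp_ne_zero _
  have hEneg : Complex.exp (-(Complex.I * (θ : ℂ))) = E⁻¹ := by
    rw [Complex.exp_neg]
  have hden : f₁ * f₄ - f₂ * f₃ = (2 * c / b) * E := by
    rw [hf₁, hf₂, hf₃, hf₄, hw₁, hw₂]
    push_cast
    field_simp
    ring
  have hdne : f₁ * f₄ - f₂ * f₃ ≠ 0 := by
    rw [hden]
    apply mul_ne_zero _ hE0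
    apply div_ne_zero _ hb0
    simpa using hc0'
  have hnum1 : (f₁ ^ 2 - f₃ ^ 2) - (f₂ ^ 2 - f₄ ^ 2) =
      ((w₂:ℂ) ^ 2 - 1) * E ^ 2 - ((w₁:ℂ) ^ 2 - 1) := by
    rw [hf₁, hf₂, hf₃, hf₄]; ring
  have hnum2 : (f₁ ^ 2 - f₃ ^ 2) + (f₂ ^ 2 - f₄ ^ 2) =
      ((w₂:ℂ) ^ 2 - 1) * E ^ 2 + ((w₁:ℂ) ^ 2 - 1) := by
    rw [hf₁, hf₂, hf₃, hf₄]; ring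
  have hnum3 : f₃ * f₄ - f₁ * f₂ = ((w₁:ℂ) * w₂ - 1) * E := by
    rw [hf₁, hf₂, hf₃, hf₄]; ring
  have hstep : ∀ X : ℂ, E - X * E⁻¹ = (E ^ 2 - X) / E := by
    intro X
    rw [eq_div_iff hE0, sub_mul, mul_assoc, inv_mul_cancel₀ hE0, mul_one]
    ring
  have hstep' : ∀ X : ℂ, E + X * E⁻¹ = (E ^ 2 + X) / E := by
    intro X
    rw [eq_div_iff hE0, add_mul, mul_assoc, inv_mul_cancel₀ hE0, mul_one]
    ring
  have hb1 : (b:ℂ) * ((b:ℂ))⁻¹ = 1 := mul_inv_cancel₀ hb0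
  have hc1 : (c:ℂ) * ((c:ℂ))⁻¹ = 1 := mul_inv_cancel₀ hc0'
  have hE1 : E * E⁻¹ = 1 := mul_inv_cancel₀ hE0
  refine ⟨hdne, ?_, ?_, ?_⟩
  · rw [hnum1, hden, key1', key2']
    simp only [sink, Ck, hEneg, hstep]
    push_cast
    field_simp
    rw [← hE]; ring
  · rw [hnum2, hden, key1', key2']
    simp only [cosk, Ck, hEneg, hstep']
    push_cast
    field_simp
    rw [← hE]; ring
  · rw [hnum3, hden, key3']
    push_cast
    field_simp
    ring
end

section
/- Let a, b > 0 and c = √(a² + b²), and for s ∈ ℝ define the complex-valued functions x(s) = −i·(a/b)·(a − c)·cos_k(s/c) and y(s) = −i·(a/b)·(a − c)·sin_k(s/c), where C_k = (a + c)/(a − c). Then for all s ∈ ℝ, x(s)² + y(s)² = a². Hence, together with z(s) = −b·s/c, the curve lies on a circular cylinder of radius a, i.e., it is a cylindrical helix. -/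
lemma key_sq (u v : ℂ) :
    ((u + v) / 2) ^ 2 + ((u - v) / (2 * Complex.I)) ^ 2 = u * v := by
  have h : (2 * Complex.I) ^ 2 = -4 := by
    rw [mul_pow, Complex.I_sq]; ring
  rw [div_pow, div_pow, h]
  have h4 : (-4 : ℂ) ≠ 0 := by norm_num
  field_simp
  ring

theorem cylindrical_helix_lies_on_cylinder
    (a b c : ℝ) (ha : 0 < a) (hb : 0 < b)
    (hc : c = Real.sqrt (a ^ 2 + b ^ 2)) :
    let Ck : ℂ := ((a + c) / (a - c) : ℝ)
    let sink : ℝ → ℂ := fun θ =>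
      (Complex.exp (Complex.I * (θ : ℂ)) - Ck * Complex.exp (-(Complex.I * (θ : ℂ)))) / (2 * Complex.I)
    let cosk : ℝ → ℂ := fun θ =>
      (Complex.exp (Complex.I * (θ : ℂ)) + Ck * Complex.exp (-(Complex.I * (θ : ℂ)))) / 2
    let x : ℝ → ℂ := fun s => -Complex.I * ((a / b : ℝ) : ℂ) * ((a - c : ℝ) : ℂ) * cosk (s / c)
    let y : ℝ → ℂ := fun s => -Complex.I * ((a / b : ℝ) : ℂ) * ((a - c : ℝ) : ℂ) * sink (s / c)
    ∀ s : ℝ, x s ^ 2 + y s ^ 2 = ((a : ℂ)) ^ 2 := by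
  intro Ck sink cosk x y s
  have hc0 : 0 ≤ c := hc ▸ Real.sqrt_nonneg _
  have hc2 : c ^ 2 = a ^ 2 + b ^ 2 := by
    rw [hc]; exact Real.sq_sqrt (by positivity)
  have hca : a < c := by nlinarith
  have hc2C : (c : ℂ) ^ 2 = (a : ℂ) ^ 2 + (b : ℂ) ^ 2 := by exact_mod_cast hc2
  simp only [x, y, cosk, sink, Ck]
  rw [Complex.exp_neg]
  set E : ℂ := Complex.exp (Complex.I * ((s / c : ℝ) : ℂ)) with hEdef
  have hE : E ≠ 0 := Complex.exp_ne_zero _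
  have hEE : E * E⁻¹ = 1 := mul_inv_cancel₀ hE
  have hbb : (b : ℂ) * (b : ℂ)⁻¹ = 1 := mul_inv_cancel₀ (by exact_mod_cast hb.ne')
  have hacc : ((a : ℂ) - c) * ((a : ℂ) - c)⁻¹ = 1 :=
    mul_inv_cancel₀ (sub_ne_zero.mpr (by exact_mod_cast hca.ne))
  have hI2 : Complex.I ^ 2 = -1 := Complex.I_sq
  push_cast
  have h1 := key_sq E ((((a : ℂ) + c) / ((a : ℂ) - c)) * E⁻¹)
  linear_combination
    (Complex.I ^ 2 * ((a : ℂ) / b) ^ 2 * ((a : ℂ) - c) ^ 2) * h1 +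
    (Complex.I ^ 2 * (a : ℂ) ^ 2 * ((b : ℂ)⁻¹) ^ 2 * ((a : ℂ) - c) ^ 2 * ((a : ℂ) + c) * ((a : ℂ) - c)⁻¹) * hEE +
    (Complex.I ^ 2 * (a : ℂ) ^ 2 * ((b : ℂ)⁻¹) ^ 2 * ((a : ℂ) - c) * ((a : ℂ) + c)) * hacc +
    ((a : ℂ) ^ 2 * ((b : ℂ)⁻¹) ^ 2 * ((a : ℂ) ^ 2 - (c : ℂ) ^ 2)) * hI2 +
    ((a : ℂ) ^ 2 * ((b : ℂ)⁻¹) ^ 2) * hc2C +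
    ((a : ℂ) ^ 2 * (b : ℂ)⁻¹ * b + (a : ℂ) ^ 2) * hbb
end

section
/- Let κ : ℝ → ℝ be twice differentiable and τ : ℝ → ℝ be differentiable with κ(s) ≠ 0 and τ(s) ≠ 0 for all s. Let α, β, γ : ℝ → ℝ satisfy the Frenet–Serret system α' = κβ, β' = −κα + τγ, γ' = −τβ (with α, β, γ sufficiently differentiable), and let x : ℝ → ℝ be four-times differentiable with x' = α. Then x satisfies the fourth-order linear differential equation x⁗ − (2κ'/κ + τ'/τ)·x''' + (κ² + τ² − (κκ'' − 2(κ')²)/κ² + κ'τ'/(κτ))·x'' + κ²·(κ'/κ − τ'/τ)·x' = 0. -/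
theorem frenet_serret_fourth_order_ode
    (κ τ : ℝ → ℝ)
    (hκ : Differentiable ℝ κ) (hκ' : Differentiable ℝ (deriv κ))
    (hτ : Differentiable ℝ τ)
    (hκ0 : ∀ s, κ s ≠ 0) (hτ0 : ∀ s, τ s ≠ 0)
    (α β γ : ℝ → ℝ)
    (hα : Differentiable ℝ α) (hβ : Differentiable ℝ β) (hγ : Differentiable ℝ γ)
    (hα' : Differentiable ℝ (deriv α)) (hα'' : Differentiable ℝ (deriv (deriv α)))
    (hβ' : Differentiable ℝ (deriv β)) (hγ' : Differentiable ℝ (deriv γ))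
    (hFS1 : ∀ s, deriv α s = κ s * β s)
    (hFS2 : ∀ s, deriv β s = -κ s * α s + τ s * γ s)
    (hFS3 : ∀ s, deriv γ s = -τ s * β s)
    (x : ℝ → ℝ)
    (hx : Differentiable ℝ x)
    (hx1 : Differentiable ℝ (deriv x))
    (hx2 : Differentiable ℝ (deriv^[2] x))
    (hx3 : Differentiable ℝ (deriv^[3] x))
    (hxα : ∀ s, deriv x s = α s) :
    ∀ s, deriv^[4] x s
      - (2 * deriv κ s / κ s + deriv τ s / τ s) * deriv^[3] x s
      + (κ s ^ 2 + τ s ^ 2 - (κ s * deriv (deriv κ) s - 2 * (deriv κ s) ^ 2) / κ s ^ 2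
          + deriv κ s * deriv τ s / (κ s * τ s)) * deriv^[2] x s
      + κ s ^ 2 * (deriv κ s / κ s - deriv τ s / τ s) * deriv x s = 0 := by
  intro s
  have hx1e : deriv x = α := funext hxα
  have e1 : deriv α = fun t => κ t * β t := funext hFS1
  have e2 : deriv β = fun t => -κ t * α t + τ t * γ t := funext hFS2
  -- second derivative of α
  have d2 : deriv (deriv α) = fun t => deriv κ t * β t + κ t * deriv β t := by
    rw [e1]; funext t; exact deriv_mul (hκ t) (hβ t)
  -- second derivative of β at s
  have dβ2 : deriv (deriv β) s
      = -(deriv κ s * α s + κ s * deriv α s) + (deriv τ s * γ s + τ s * deriv γ s) := by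
    rw [e2]
    have h : (fun t => -κ t * α t + τ t * γ t) = fun t => -(κ t * α t) + τ t * γ t := by
      funext t; ring
    rw [h, deriv_fun_add (f := fun t => -(κ t * α t)) (g := fun t => τ t * γ t)
        ((hκ.mul hα).neg s) ((hτ.mul hγ) s),
      deriv.fun_neg, deriv_fun_mul (hκ s) (hα s), deriv_fun_mul (hτ s) (hγ s)]
  -- third derivative of α at s
  have d3 : deriv (deriv (deriv α)) s
      = (deriv (deriv κ) s * β s + deriv κ s * deriv β s)
        + (deriv κ s * deriv β s + κ s * deriv (deriv β) s) := by
    rw [d2, deriv_fun_add (f := fun t => deriv κ t * β t) (g := fun t => κ t * deriv β t)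
        ((hκ'.mul hβ) s) ((hκ.mul hβ') s),
      deriv_fun_mul (hκ' s) (hβ s), deriv_fun_mul (hκ s) (hβ' s)]
  -- identify iterated derivatives of x
  have i2 : deriv^[2] x = deriv α := by
    show deriv (deriv^[1] x) = deriv α
    rw [Function.iterate_one, hx1e]
  have i3 : deriv^[3] x = deriv (deriv α) := by
    show deriv (deriv^[2] x) = _
    rw [i2]
  have i4 : deriv^[4] x s = deriv (deriv (deriv α)) s := by
    show deriv (deriv^[3] x) s = _
    rw [i3]
  rw [i4, i3, i2, d3, dβ2, d2, e1, hxα]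
  simp only [hFS1, hFS2, hFS3]
  have h1 := hκ0 s; have h2 := hτ0 s
  field_simp
  ring
end
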